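/- Let D be a complete, cocomplete, extremally co-well-powered, (extremal epi, mono) category. A QD-morphism f : (X₁, Q₁) → (X₂, Q₂) is an extremal epimorphism in QD if and only if its underlying morphism f : X₁ → X₂ is an extremal epimorphism in D and Q₂ equals the push forward filtration f_*(Q₁). -/

import Mathlib

open CategoryTheory CategoryTheory.Limits

universe w v u v₂ u₂

namespace FilteredCats

variable {D : Type u} [Category.{v} D]

/-- The class of morphisms of `D` with source `X`. -/
def MorFrom (X : D) : Type (max u v) := Σ Y : D, X ⟶ Y

/-- `Dom δ₁ δ₂` means `δ₁ ≥ δ₂`: there is `h` with `h ∘ δ₁ = δ₂`. -/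
def Dom {X : D} (δ₁ δ₂ : MorFrom X) : Prop :=
  ∃ h : δ₁.1 ⟶ δ₂.1, δ₁.2 ≫ h = δ₂.2

/-- A projective filtration on `X`: a nonempty, directed, saturated class of
morphisms with source `X`. -/
structure ProjFilt (X : D) where
  carrier : Set (MorFrom X)
  nonempty' : carrier.Nonempty
  directed' : ∀ δ₁ ∈ carrier, ∀ δ₂ ∈ carrier, ∃ δ ∈ carrier, Dom δ δ₁ ∧ Dom δ δ₂
  saturated' : ∀ δ₁ ∈ carrier, ∀ δ₂, Dom δ₁ δ₂ → δ₂ ∈ carrier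

/-- The pull back of a set of morphisms with source `X` along `f : X' ⟶ X`. -/
def pullSet {X' X : D} (f : X' ⟶ X) (S : Set (MorFrom X)) : Set (MorFrom X') :=
  {δ' | ∃ δ ∈ S, δ' = ⟨δ.1, f ≫ δ.2⟩}

/-- The pull back of a projective filtration along `f : X' ⟶ X`. -/
def ProjFilt.pull {X' X : D} (f : X' ⟶ X) (P : ProjFilt X) : ProjFilt X' where
  carrier := pullSet f P.carrier
  nonempty' := by
    obtain ⟨δ, hδ⟩ := P.nonempty'
    exact ⟨⟨δ.1, f ≫ δ.2⟩, δ, hδ, rfl⟩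
  directed' := by
    rintro _ ⟨δ₁, h₁, rfl⟩ _ ⟨δ₂, h₂, rfl⟩
    obtain ⟨δ, hδ, ⟨g₁, hg₁⟩, ⟨g₂, hg₂⟩⟩ := P.directed' δ₁ h₁ δ₂ h₂
    exact ⟨⟨δ.1, f ≫ δ.2⟩, ⟨δ, hδ, rfl⟩,
      ⟨g₁, by simp [hg₁]⟩, ⟨g₂, by simp [hg₂]⟩⟩
  saturated' := by
    rintro _ ⟨δ, hδ, rfl⟩ δ₂ ⟨h, hh⟩
    refine ⟨⟨δ₂.1, δ.2 ≫ h⟩, P.saturated' δ hδ _ ⟨h, rfl⟩, ?_⟩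
    obtain ⟨Y₂, g₂⟩ := δ₂
    have hg : g₂ = f ≫ (δ.2 ≫ h) := by simpa using hh.symm
    exact Sigma.ext rfl (heq_of_eq hg)

/-- A projectively filtered object of `D`. -/
structure PObj (D : Type u) [Category.{v} D] where
  base : D
  filt : ProjFilt base

/-- A morphism of projectively filtered objects: a morphism of the underlying
objects such that the pull back of the target filtration is contained in the
source filtration. -/
structure PHom (A B : PObj D) : Type v where
  toHom : A.base ⟶ B.base
  mem : ∀ δ ∈ B.filt.carrier, (⟨δ.1, toHom ≫ δ.2⟩ : MorFrom A.base) ∈ A.filt.carrier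

theorem PHom.ext' {A B : PObj D} {f g : PHom A B} (h : f.toHom = g.toHom) : f = g := by
  cases f; cases g; cases h; rfl

instance : Category.{v} (PObj D) where
  Hom := PHom
  id A := ⟨𝟙 A.base, fun δ hδ => by simp only [Category.id_comp]; exact hδ⟩
  comp {A B C} f g := ⟨f.toHom ≫ g.toHom, fun δ hδ => by
    have h1 := g.mem δ hδ
    have h2 := f.mem _ h1
    simpa using h2⟩
  id_comp f := PHom.ext' (Category.id_comp _)
  comp_id f := PHom.ext' (Category.comp_id _)
  assoc f g h := PHom.ext' (Category.assoc _ _ _)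

@[simp] theorem PObj.id_toHom (A : PObj D) : PHom.toHom (𝟙 A) = 𝟙 A.base := rfl
@[simp] theorem PObj.comp_toHom {A B C : PObj D} (f : A ⟶ B) (g : B ⟶ C) :
    PHom.toHom (f ≫ g) = PHom.toHom f ≫ PHom.toHom g := rfl

/-- The forgetful functor `PD → D`. -/
def Pforget (D : Type u) [Category.{v} D] : PObj D ⥤ D where
  obj A := A.base
  map f := PHom.toHom f

/-- The discrete filtration functor `D → PD`, `X ↦ (X, M(X))`. -/
def Pdiscrete (D : Type u) [Category.{v} D] : D ⥤ PObj D where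
  obj X :=
    { base := X
      filt :=
        { carrier := Set.univ
          nonempty' := ⟨⟨X, 𝟙 X⟩, trivial⟩
          directed' := fun δ₁ _ δ₂ _ =>
            ⟨⟨X, 𝟙 X⟩, trivial, ⟨δ₁.2, Category.id_comp _⟩, ⟨δ₂.2, Category.id_comp _⟩⟩
          saturated' := fun _ _ _ _ => trivial } }
  map f := ⟨f, fun _ _ => trivial⟩

/-- The functor `PD → PE` induced by a functor `G : D → E`. -/
def Pfunctor {E : Type u₂} [Category.{v₂} E] (G : D ⥤ E) : PObj D ⥤ PObj E where
  obj A :=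
    { base := G.obj A.base
      filt :=
        { carrier := {δ' | ∃ δ ∈ A.filt.carrier,
            Dom (⟨G.obj δ.1, G.map δ.2⟩ : MorFrom (G.obj A.base)) δ'}
          nonempty' := by
            obtain ⟨δ, hδ⟩ := A.filt.nonempty'
            exact ⟨⟨G.obj δ.1, G.map δ.2⟩, δ, hδ, ⟨𝟙 _, Category.comp_id _⟩⟩
          directed' := by
            rintro δ'₁ ⟨δ₁, h₁, g₁, hg₁⟩ δ'₂ ⟨δ₂, h₂, g₂, hg₂⟩
            obtain ⟨δ, hδ, ⟨k₁, hk₁⟩, ⟨k₂, hk₂⟩⟩ := A.filt.directed' δ₁ h₁ δ₂ h₂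
            refine ⟨⟨G.obj δ.1, G.map δ.2⟩, ⟨δ, hδ, ⟨𝟙 _, Category.comp_id _⟩⟩,
              ⟨G.map k₁ ≫ g₁, ?_⟩, ⟨G.map k₂ ≫ g₂, ?_⟩⟩
            · rw [← Category.assoc, ← G.map_comp, hk₁, hg₁]
            · rw [← Category.assoc, ← G.map_comp, hk₂, hg₂]
          saturated' := by
            rintro δ'₁ ⟨δ, hδ, g, hg⟩ δ'₂ ⟨h, hh⟩
            exact ⟨δ, hδ, ⟨g ≫ h, by rw [← Category.assoc, hg, hh]⟩⟩ } }
  map {A B} f :=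
    ⟨G.map (PHom.toHom f), by
      rintro δ' ⟨δ, hδ, g, hg⟩
      exact ⟨⟨δ.1, PHom.toHom f ≫ δ.2⟩, f.mem δ hδ,
        ⟨g, by rw [← hg, ← Category.assoc, ← G.map_comp]⟩⟩⟩
  map_id A := PHom.ext' (G.map_id _)
  map_comp f g := PHom.ext' (G.map_comp _ _)

/-- An extremal epimorphism: an epimorphism such that in any factorisation
through a monomorphism, the monomorphism is an isomorphism. -/
def ExtremalEpi {C : Type u₂} [Category.{v₂} C] {X Y : C} (e : X ⟶ Y) : Prop :=
  Epi e ∧ ∀ ⦃Z : C⦄ (g : X ⟶ Z) (m : Z ⟶ Y), Mono m → g ≫ m = e → IsIso m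

/-- An (extremal epi, mono) category: every morphism factors as an extremal
epimorphism followed by a monomorphism and such factorisations have the
diagonal fill-in property. -/
structure EMCat (C : Type u₂) [Category.{v₂} C] : Prop where
  fact : ∀ {X Y : C} (f : X ⟶ Y), ∃ (Z : C) (e : X ⟶ Z) (m : Z ⟶ Y),
    ExtremalEpi e ∧ Mono m ∧ e ≫ m = f
  diag : ∀ {A B Z X : C} (e : A ⟶ B) (m : Z ⟶ X) (g : A ⟶ Z) (h : B ⟶ X),
    ExtremalEpi e → Mono m → g ≫ m = e ≫ h → ∃ d : B ⟶ Z, e ≫ d = g ∧ d ≫ m = h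

/-- A projective filtration is reduced if it has an initial subclass of
extremal epimorphisms. -/
def ProjFilt.Reduced {X : D} (P : ProjFilt X) : Prop :=
  ∀ δ ∈ P.carrier, ∃ ε ∈ P.carrier, ExtremalEpi ε.2 ∧ Dom ε δ

/-- The category of reduced projectively filtered objects of `D`. -/
def QObj (D : Type u) [Category.{v} D] := ObjectProperty.FullSubcategory (fun A : PObj D => A.filt.Reduced)

instance : Category.{v} (QObj D) := ObjectProperty.FullSubcategory.category _

/-- The inclusion functor `QD → PD`. -/
def qpInclusion (D : Type u) [Category.{v} D] : QObj D ⥤ PObj D :=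
  ObjectProperty.ι _

/-- A category is extremally co-well-powered if every object has, up to
isomorphism, only a (small) set of extremal epimorphisms out of it. -/
def ECWP (C : Type u₂) [Category.{v₂} C] : Prop :=
  ∀ X : C, ∃ (ι : Type v₂) (Y : ι → C) (e : ∀ i, X ⟶ Y i),
    (∀ i, ExtremalEpi (e i)) ∧
    ∀ ⦃Z : C⦄ (f : X ⟶ Z), ExtremalEpi f → ∃ (i : ι) (φ : Y i ≅ Z), e i ≫ φ.hom = f

/-- The category `(P, D)` associated to a projective filtration: objects are the
elements of `P`, morphisms `δ₁ → δ₂` are morphisms `g` of `D` with `g ∘ δ₁ = δ₂`. -/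
def FiltCat {X : D} (P : ProjFilt X) : Type (max u v) := {δ : MorFrom X // δ ∈ P.carrier}

instance {X : D} (P : ProjFilt X) : Category.{v} (FiltCat P) where
  Hom δ₁ δ₂ := {g : δ₁.1.1 ⟶ δ₂.1.1 // δ₁.1.2 ≫ g = δ₂.1.2}
  id δ := ⟨𝟙 _, Category.comp_id _⟩
  comp f g := ⟨f.1 ≫ g.1, by rw [← Category.assoc, f.2, g.2]⟩
  id_comp f := Subtype.ext (Category.id_comp _)
  comp_id f := Subtype.ext (Category.comp_id _)
  assoc f g h := Subtype.ext (Category.assoc _ _ _)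

/-- The functor `(P, D) → D` sending an element of the filtration to its target. -/
def FiltDiagram {X : D} (P : ProjFilt X) : FiltCat P ⥤ D where
  obj δ := δ.1.1
  map g := g.1

/-- The canonical cone on the diagram of a projective filtration, with apex the
underlying object. -/
def filtCone {X : D} (P : ProjFilt X) : Limits.Cone (FiltDiagram P) where
  pt := X
  π :=
    { app := fun δ => δ.1.2
      naturality := fun δ₁ δ₂ g => by
        have := g.2
        dsimp [FiltDiagram] at *
        simp [this] }

/-- A reduced projective filtration is an iso-filtration if the canonical cone
on its diagram is a limit cone, i.e. the limit exists and the canonical morphism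
from the underlying object to it is an isomorphism. -/
def IsoFilt {X : D} (P : ProjFilt X) : Prop :=
  Nonempty (Limits.IsLimit (filtCone P))

/-- The category of iso-filtered objects of `D`. -/
def KObj (D : Type u) [Category.{v} D] :=
  ObjectProperty.FullSubcategory (fun A : QObj D => IsoFilt A.obj.filt)

instance : Category.{v} (KObj D) := ObjectProperty.FullSubcategory.category _

/-- The inclusion functor `KD → QD`. -/
def kqInclusion (D : Type u) [Category.{v} D] : KObj D ⥤ QObj D :=
  ObjectProperty.ι _

/-- The forgetful functor `KD → D`. -/
def Kforget (D : Type u) [Category.{v} D] : KObj D ⥤ D :=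
  kqInclusion D ⋙ qpInclusion D ⋙ Pforget D

/-- The smallest projective filtration containing a class of morphisms
(as a class). -/
def genSet {X : D} (S : Set (MorFrom X)) : Set (MorFrom X) :=
  {δ | ∀ P : ProjFilt X, S ⊆ P.carrier → δ ∈ P.carrier}

/-- The reduction of a class of morphisms: the saturation of the class of
extremal epimorphism parts of (extremal epi, mono)-factorisations of its
elements. -/
def redSet {X : D} (S : Set (MorFrom X)) : Set (MorFrom X) :=
  {δ | ∃ ε : MorFrom X, ExtremalEpi ε.2 ∧
    (∃ δ' ∈ S, ∃ m : ε.1 ⟶ δ'.1, Mono m ∧ ε.2 ≫ m = δ'.2) ∧ Dom ε δ}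

/-- The push forward of a filtration class along `f` (single morphism case). -/
def pushSet {X Y : D} (f : X ⟶ Y) (S : Set (MorFrom X)) : Set (MorFrom Y) :=
  {g | (⟨g.1, f ≫ g.2⟩ : MorFrom X) ∈ S}

/-- The discrete filtration on an object, as an iso-filtered object. -/
def kDiscreteObj (X : D) : KObj D where
  obj :=
    { obj := (Pdiscrete D).obj X
      property := fun δ _ => ⟨⟨X, 𝟙 X⟩, trivial,
        ⟨(inferInstance : Epi (𝟙 X)), fun _ g m hm hgm => by
          haveI : IsSplitEpi m := ⟨⟨⟨g, hgm⟩⟩⟩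
          exact isIso_of_mono_of_isSplitEpi m⟩,
        ⟨δ.2, Category.id_comp _⟩⟩ }
  property := ⟨{
    lift := fun c => c.π.app ⟨⟨X, 𝟙 X⟩, trivial⟩
    fac := fun c j => by
      have h := c.π.naturality (X := ⟨⟨X, 𝟙 X⟩, trivial⟩) (Y := j)
        ⟨j.1.2, Category.id_comp _⟩
      dsimp [FiltDiagram, filtCone] at h ⊢
      exact h.symm.trans (Category.id_comp _)
    uniq := fun c m hm => by
      have h := hm ⟨⟨X, 𝟙 X⟩, trivial⟩
      rw [← Category.comp_id m]
      exact h }⟩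

/-- The discrete filtration functor `D → KD`. -/
def kDiscrete (D : Type u) [Category.{v} D] : D ⥤ KObj D where
  obj X := kDiscreteObj X
  map f := ⟨⟨⟨f, fun _ _ => trivial⟩⟩⟩
  map_id _ := rfl
  map_comp _ _ := rfl

/-- The morphism in `KD` from an iso-filtered object to the discrete object on
the target of an element of its filtration. -/
def kToDiscrete {A : KObj D} (δ : MorFrom A.obj.obj.base)
    (hδ : δ ∈ A.obj.obj.filt.carrier) : A ⟶ kDiscreteObj δ.1 :=
  ⟨⟨show PHom A.obj.obj ((kDiscreteObj δ.1).obj.obj) from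
    ⟨δ.2, fun γ _ => A.obj.obj.filt.saturated' δ hδ _ ⟨γ.2, rfl⟩⟩⟩⟩

/-- The natural transformation `P(G) → P(H)` induced by `ν : G → H`. -/
def Pnat {E : Type u₂} [Category.{v₂} E] {G H : D ⥤ E} (ν : G ⟶ H) :
    Pfunctor G ⟶ Pfunctor H where
  app A :=
    ⟨ν.app A.base, by
      rintro δ' ⟨δ, hδ, g, hg⟩
      exact ⟨δ, hδ, ⟨ν.app δ.1 ≫ g, by
        rw [← Category.assoc, ν.naturality, Category.assoc, hg]; rfl⟩⟩⟩
  naturality {A B} f := PHom.ext' (ν.naturality (PHom.toHom f))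

/-!
A factorisation `p ≫ i` in `D` of the underlying map of `f : (X₁, Q₁) → (X₂, Q₂)` lifts to the
factorisation `(X₁, Q₁) → (Z, p_*(Q₁)) → (X₂, Q₂)` in `QD`: the push forward of a reduced filtration
is reduced thanks to the diagonal fill-in, and the second map is mono in `QD` when `i` is mono in
`D`. Hence if `f` is extremal in `QD`, every such `i` is an isomorphism, which (with equalizers)
makes the underlying map extremal in `D`; the case `p = f`, `i = 𝟙` gives `f_*(Q₁) ⊆ Q₂`.
Conversely the forgetful functor `QD → D` is faithful and, thanks to the discrete filtrations,
preserves monos; and an isomorphism of `D` whose target carries the push forward filtration is an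
isomorphism of `QD`.
-/

theorem extremalEpi_iff_extremalEpi {C : Type u₂} [Category.{v₂} C] {X Y : C} (e : X ⟶ Y) :
    ExtremalEpi e ↔ CategoryTheory.ExtremalEpi e :=
  ⟨fun ⟨he, hiso⟩ => { toEpi := he, isIso := fun p i fac _ => hiso p i inferInstance fac },
    fun _ => ⟨inferInstance, fun _ p i _ fac => CategoryTheory.ExtremalEpi.isIso e p i fac⟩⟩

theorem mem_pushSet {X Y : D} (f : X ⟶ Y) (S : Set (MorFrom X)) (g : MorFrom Y) :
    g ∈ pushSet f S ↔ (⟨g.1, f ≫ g.2⟩ : MorFrom X) ∈ S :=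
  Iff.rfl

theorem pushSet_id {X : D} (S : Set (MorFrom X)) : pushSet (𝟙 X) S = S := by
  ext δ
  rw [mem_pushSet, Category.id_comp]
  exact Iff.rfl

theorem pushSet_subset_pushSet_comp {A C : PObj D} (p : A ⟶ C) {Y : D} (i : C.base ⟶ Y) :
    pushSet i C.filt.carrier ⊆ pushSet (PHom.toHom p ≫ i) A.filt.carrier := by
  intro δ hδ
  rw [mem_pushSet, Category.assoc]
  exact p.mem _ hδ

def ProjFilt.push [HasTerminal D] [HasBinaryProducts D] {X Y : D} (f : X ⟶ Y)
    (Q : ProjFilt X) : ProjFilt Y where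
  carrier := pushSet f Q.carrier
  nonempty' := by
    obtain ⟨δ, hδ⟩ := Q.nonempty'
    exact ⟨⟨⊤_ D, terminal.from Y⟩,
      Q.saturated' δ hδ _ ⟨terminal.from δ.1, Subsingleton.elim _ _⟩⟩
  directed' := by
    rintro g₁ hg₁ g₂ hg₂
    obtain ⟨δ, hδ, ⟨h₁, hh₁⟩, ⟨h₂, hh₂⟩⟩ := Q.directed' _ hg₁ _ hg₂
    refine ⟨⟨g₁.1 ⨯ g₂.1, prod.lift g₁.2 g₂.2⟩, ?_, ⟨prod.fst, prod.lift_fst _ _⟩,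
      ⟨prod.snd, prod.lift_snd _ _⟩⟩
    refine Q.saturated' δ hδ _ ⟨prod.lift h₁ h₂, ?_⟩
    ext <;> simp [hh₁, hh₂]
  saturated' := by
    rintro g₁ hg₁ g₂ ⟨h, hh⟩
    exact Q.saturated' _ hg₁ _ ⟨h, by rw [Category.assoc, hh]⟩

theorem ProjFilt.Reduced.push [HasTerminal D] [HasBinaryProducts D] (hEM : EMCat D)
    {X Y : D} {Q : ProjFilt X} (hQ : Q.Reduced) (f : X ⟶ Y) : (Q.push f).Reduced := by
  rintro g hg
  obtain ⟨Z, e, m, he, hm, hem⟩ := hEM.fact g.2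
  obtain ⟨ε, hε, hεe, h, hh⟩ := hQ _ hg
  -- the extremal epi `ε` below `f ≫ g` lifts along the mono part `m` of `g`
  obtain ⟨d, hd, -⟩ := hEM.diag ε.2 m (f ≫ e) h hεe hm (by rw [Category.assoc, hem, hh])
  exact ⟨⟨Z, e⟩, Q.saturated' ε hε _ ⟨d, hd⟩, he, ⟨m, hem⟩⟩

theorem PObj.isIso_iff {B C : PObj D} (u : C ⟶ B) :
    IsIso u ↔ IsIso (PHom.toHom u) ∧
      pushSet (PHom.toHom u) C.filt.carrier ⊆ B.filt.carrier := by
  constructor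
  · intro hu
    refine ⟨(Pforget D).map_isIso u, fun δ hδ => ?_⟩
    have h := (inv u).mem _ hδ
    rwa [← Category.assoc, ← PObj.comp_toHom, IsIso.inv_hom_id, PObj.id_toHom,
      Category.id_comp] at h
  · rintro ⟨hu, hsub⟩
    let v : B ⟶ C := ⟨inv (PHom.toHom u), fun δ hδ => hsub <| by
      change (⟨δ.1, PHom.toHom u ≫ inv (PHom.toHom u) ≫ δ.2⟩ : MorFrom C.base) ∈ C.filt.carrier
      rw [IsIso.hom_inv_id_assoc]
      exact hδ⟩
    exact ⟨v, PHom.ext' (IsIso.hom_inv_id _), PHom.ext' (IsIso.inv_hom_id _)⟩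

def qForget (D : Type u) [Category.{v} D] : QObj D ⥤ D := qpInclusion D ⋙ Pforget D

instance : (qForget D).Faithful where
  map_injective h := ObjectProperty.hom_ext _ (PHom.ext' h)

namespace QObj

theorem isIso_iff {B C : QObj D} (u : C ⟶ B) :
    IsIso u ↔ IsIso ((qForget D).map u) ∧
      pushSet ((qForget D).map u) C.obj.filt.carrier ⊆ B.obj.filt.carrier :=
  (ObjectProperty.isIso_hom_iff u).symm.trans (PObj.isIso_iff u.hom)

theorem isIso_of_isIso_map {A B C : QObj D} (g : A ⟶ C) (m : C ⟶ B) [IsIso ((qForget D).map m)]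
    (hB : pushSet ((qForget D).map (g ≫ m)) A.obj.filt.carrier ⊆ B.obj.filt.carrier) :
    IsIso m := by
  rw [isIso_iff]
  exact ⟨‹_›, (pushSet_subset_pushSet_comp g.hom _).trans hB⟩

theorem mono_map_of_mono {A B : QObj D} (m : A ⟶ B) [Mono m] : Mono ((qForget D).map m) where
  right_cancellation {W} a b hab := by
    let lift (c : W ⟶ A.obj.base) : (kDiscreteObj W).obj ⟶ A :=
      ObjectProperty.homMk ⟨c, fun _ _ => trivial⟩
    have := (cancel_mono m).mp (ObjectProperty.hom_ext _ (PHom.ext' hab) :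
      lift a ≫ m = lift b ≫ m)
    exact congrArg (fun c => PHom.toHom c.hom) this

theorem extremalEpi_of_extremalEpi_map {A B : QObj D} (f : A ⟶ B)
    [CategoryTheory.ExtremalEpi ((qForget D).map f)]
    (hB : pushSet ((qForget D).map f) A.obj.filt.carrier ⊆ B.obj.filt.carrier) :
    CategoryTheory.ExtremalEpi f where
  toEpi := (qForget D).epi_of_epi_map inferInstance
  isIso p m fac _ := by
    have := mono_map_of_mono m
    have := CategoryTheory.ExtremalEpi.isIso ((qForget D).map f) ((qForget D).map p)
      ((qForget D).map m) (by rw [← Functor.map_comp, fac])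
    exact isIso_of_isIso_map p m (fac ▸ hB)

section Push

variable [HasTerminal D] [HasBinaryProducts D]

def pushObj (hEM : EMCat D) (A : QObj D) {Z : D} (p : A.obj.base ⟶ Z) : QObj D :=
  ⟨⟨Z, A.obj.filt.push p⟩, A.property.push hEM p⟩

def toPushObj (hEM : EMCat D) (A : QObj D) {Z : D} (p : A.obj.base ⟶ Z) : A ⟶ pushObj hEM A p :=
  ObjectProperty.homMk ⟨p, fun _ h => h⟩

def pushObjLift (hEM : EMCat D) {A B : QObj D} (f : A ⟶ B) {Z : D} (p : A.obj.base ⟶ Z)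
    (i : Z ⟶ B.obj.base) (fac : p ≫ i = (qForget D).map f) : pushObj hEM A p ⟶ B :=
  ObjectProperty.homMk ⟨i, fun δ hδ => by
    change (⟨δ.1, p ≫ i ≫ δ.2⟩ : MorFrom A.obj.base) ∈ A.obj.filt.carrier
    rw [← Category.assoc, fac]
    exact f.hom.mem δ hδ⟩

theorem toPushObj_comp_pushObjLift (hEM : EMCat D) {A B : QObj D} (f : A ⟶ B) {Z : D}
    (p : A.obj.base ⟶ Z) (i : Z ⟶ B.obj.base) (fac : p ≫ i = (qForget D).map f) :
    toPushObj hEM A p ≫ pushObjLift hEM f p i fac = f :=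
  ObjectProperty.hom_ext _ (PHom.ext' fac)

theorem isIso_pushObjLift (hEM : EMCat D) {A B : QObj D} (f : A ⟶ B)
    [CategoryTheory.ExtremalEpi f] {Z : D} (p : A.obj.base ⟶ Z) (i : Z ⟶ B.obj.base)
    [hi : Mono i] (fac : p ≫ i = (qForget D).map f) :
    IsIso (pushObjLift hEM f p i fac) :=
  have : Mono (pushObjLift hEM f p i fac) := (qForget D).mono_of_mono_map hi
  CategoryTheory.ExtremalEpi.isIso f _ _ (toPushObj_comp_pushObjLift hEM f p i fac)

theorem extremalEpi_map_of_extremalEpi [HasEqualizers D] (hEM : EMCat D) {A B : QObj D}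
    (f : A ⟶ B) [CategoryTheory.ExtremalEpi f] : CategoryTheory.ExtremalEpi ((qForget D).map f) :=
  .mk_of_hasEqualizers _ fun _ p i fac hi => by
    have := isIso_pushObjLift hEM f p i fac (hi := hi)
    exact (qForget D).map_isIso (pushObjLift hEM f p i fac)

theorem pushSet_subset_of_extremalEpi (hEM : EMCat D) {A B : QObj D} (f : A ⟶ B)
    [CategoryTheory.ExtremalEpi f] :
    pushSet ((qForget D).map f) A.obj.filt.carrier ⊆ B.obj.filt.carrier := by
  have hiso := isIso_pushObjLift hEM f _ (𝟙 _) (Category.comp_id _)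
  rw [isIso_iff] at hiso
  exact (pushSet_id (pushSet ((qForget D).map f) A.obj.filt.carrier)).superset.trans hiso.2

end Push

end QObj

theorem qobj_extremal_epi_iff_general [Limits.HasLimits D]
    (hEM : EMCat D)
    (A B : QObj D) (f : A ⟶ B) :
    ExtremalEpi f ↔
      (ExtremalEpi (PHom.toHom f.hom) ∧
        B.obj.filt.carrier = pushSet (PHom.toHom f.hom) A.obj.filt.carrier) := by
  rw [extremalEpi_iff_extremalEpi, extremalEpi_iff_extremalEpi]
  constructor
  · intro hf
    exact ⟨QObj.extremalEpi_map_of_extremalEpi hEM f,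
      Set.Subset.antisymm f.hom.mem (QObj.pushSet_subset_of_extremalEpi hEM f)⟩
  · rintro ⟨hf, hB⟩
    have hf' : CategoryTheory.ExtremalEpi ((qForget D).map f) := hf
    exact QObj.extremalEpi_of_extremalEpi_map f hB.superset

/-- a `QD`-morphism is an extremal epimorphism in `QD` iff its
underlying morphism is an extremal epimorphism in `D` and the target filtration
is the push forward of the source filtration. -/
theorem qobj_extremal_epi_iff [Limits.HasLimits D] [Limits.HasColimits D]
    (hecwp : ECWP D) (hEM : EMCat D)
    (A B : QObj D) (f : A ⟶ B) :
    ExtremalEpi f ↔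
      (ExtremalEpi (PHom.toHom f.hom) ∧
        B.obj.filt.carrier = pushSet (PHom.toHom f.hom) A.obj.filt.carrier) :=
  qobj_extremal_epi_iff_general hEM A B f

end FilteredCats
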